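/- Let a_j, b_k, c_n be Laurent polynomials (finitely many nonzero) defining X, Y, Z as power series in v, with c_0' + a_0·b_0' = 0 (the core curve is Legendrian) and c_n = −(1/n)Σ_{j+k=n} k a_j b_k. Let N_1 bound the pole order at 0 of all coefficients c_n' + Σ_{j+k=n} a_j b_k'. Then for every N ≥ N_1, the function (Z_u + X·Y_u)(u, u^N) is a holomorphic polynomial in u divisible by u^{N−N_1}, and consequently sup_{|ζ|≤1} |∫_0^ζ (Z_u + X·Y_u)(u, u^N) du| → 0 as N → ∞. -/

import Mathlib

/-!
The Legendrian condition kills the `k = 0` term of `g N`, and for `k ≥ 1` the term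
`(p_k(u) / u ^ N₁) * u ^ (k * N)` is `u ^ (N - N₁)` times a polynomial. Hence on the unit disc
`‖g N u‖ ≤ C * ‖u‖ ^ (N - N₁)` with `C` independent of `N`, and integrating this bound along the
ray `t ↦ t * ζ` gives `‖h ζ‖ ≤ C / (N - N₁ + 1)`.
-/

open Polynomial Set Filter Topology Metric

theorem sum_range_mul_pow_eq_pow_mul_eval {K : Type*} [Field K] (m N N₁ : ℕ) (e : ℕ → K)
    (p : ℕ → K[X]) {u : K} (hu : u ≠ 0) (he₀ : e 0 = 0)
    (he : ∀ k, e k = (p k).eval u / u ^ N₁) (hN : N₁ ≤ N) :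
    ∑ k ∈ Finset.range m, e k * u ^ (k * N) =
      u ^ (N - N₁) * (∑ k ∈ Finset.Ico 1 m, p k * X ^ (k * N - N)).eval u := by
  have hzero : ∀ k ∈ Finset.range m, k ∉ Finset.Ico 1 m → e k * u ^ (k * N) = 0 := by
    intro k hk hk'
    obtain rfl : k = 0 := by simp only [Finset.mem_range, Finset.mem_Ico] at hk hk'; omega
    rw [he₀, zero_mul]
  have hsub : Finset.Ico 1 m ⊆ Finset.range m := fun k hk => by
    simp only [Finset.mem_Ico, Finset.mem_range] at hk ⊢
    omega
  rw [← Finset.sum_subset hsub hzero, eval_finsetSum, Finset.mul_sum]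
  refine Finset.sum_congr rfl fun k hk => ?_
  have hNk : N ≤ k * N := Nat.le_mul_of_pos_left N (Finset.mem_Ico.1 hk).1
  have hpow : u ^ (k * N) = u ^ N₁ * (u ^ (N - N₁) * u ^ (k * N - N)) := by
    rw [← pow_add, ← pow_add]
    congr 1
    omega
  rw [he, hpow, eval_mul, eval_pow, eval_X]
  field_simp

theorem exists_norm_eval_sum_mul_X_pow_le {𝕜 ι : Type*} [NormedField 𝕜] [ProperSpace 𝕜]
    (s : Finset ι) (p : ι → 𝕜[X]) :
    ∃ C, ∀ (n : ι → ℕ) (u : 𝕜), ‖u‖ ≤ 1 → ‖(∑ k ∈ s, p k * X ^ n k).eval u‖ ≤ C := by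
  have hbound : ∀ k, ∃ C, ∀ u ∈ closedBall (0 : 𝕜) 1, ‖(p k).eval u‖ ≤ C := fun k =>
    (isCompact_closedBall 0 1).exists_bound_of_continuousOn (p k).continuous.continuousOn
  choose C hC using hbound
  refine ⟨∑ k ∈ s, C k, fun n u hu => ?_⟩
  rw [eval_finsetSum]
  refine (norm_sum_le _ _).trans (Finset.sum_le_sum fun k _ => ?_)
  rw [eval_mul, eval_pow, eval_X, norm_mul, norm_pow]
  exact (mul_le_of_le_one_right (norm_nonneg _) (pow_le_one₀ (norm_nonneg _) hu)).trans
    (hC k u (mem_closedBall_zero_iff.2 hu))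

theorem norm_sub_le_of_norm_deriv_le_mul_pow {E : Type*} [NormedAddCommGroup E]
    [NormedSpace ℝ E] {f f' : ℝ → E} {K : ℝ} {M : ℕ} (hf : ContinuousOn f (Icc 0 1))
    (hf' : ∀ t ∈ Ioo (0 : ℝ) 1, HasDerivAt f (f' t) t)
    (bound : ∀ t ∈ Ioo (0 : ℝ) 1, ‖f' t‖ ≤ K * t ^ M) :
    ‖f 1 - f 0‖ ≤ K / (M + 1) := by
  have hK : 0 ≤ K := nonneg_of_mul_nonneg_left
    ((norm_nonneg _).trans (bound (1 / 2) ⟨by norm_num, by norm_num⟩)) (by positivity)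
  have hB : ∀ t, HasDerivAt (fun t => K * t ^ (M + 1) / (M + 1)) (K * t ^ M) t := fun t => by
    refine (((hasDerivAt_pow (M + 1) t).const_mul K).div_const ((M : ℝ) + 1)).congr_deriv ?_
    rw [Nat.add_sub_cancel]
    push_cast
    field_simp
  -- No derivative is assumed at `0`: run the comparison on `[s, 1]`, then let `s → 0⁺`.
  have hstep : ∀ s ∈ Ioo (0 : ℝ) 1, ‖f 1 - f s‖ ≤ K / (M + 1) := fun s hs => by
    have hIco : ∀ t ∈ Ico s 1, t ∈ Ioo (0 : ℝ) 1 := fun t ht => ⟨hs.1.trans_le ht.1, ht.2⟩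
    have hB₀ : ‖f s - f s‖ ≤ K * s ^ (M + 1) / (M + 1) := by
      rw [sub_self, norm_zero]
      exact div_nonneg (mul_nonneg hK (pow_nonneg hs.1.le _)) (by positivity)
    have := image_norm_le_of_norm_deriv_right_le_deriv_boundary (f := fun t => f t - f s)
      ((hf.mono (Icc_subset_Icc_left hs.1.le)).sub continuousOn_const)
      (fun t ht => ((hf' t (hIco t ht)).sub_const (f s)).hasDerivWithinAt) hB₀ hB
      (fun t ht => bound t (hIco t ht)) ⟨hs.2.le, le_rfl⟩
    simpa using this
  have hlim : Tendsto (fun s => ‖f 1 - f s‖) (𝓝[>] 0) (𝓝 ‖f 1 - f 0‖) := by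
    have := (hf 0 ⟨le_rfl, zero_le_one⟩).mono Ioo_subset_Icc_self
    rw [ContinuousWithinAt, nhdsWithin_Ioo_eq_nhdsGT zero_lt_one] at this
    exact (tendsto_const_nhds.sub this).norm
  exact le_of_tendsto hlim (eventually_of_mem (Ioo_mem_nhdsGT zero_lt_one) hstep)

theorem Complex.norm_sub_le_of_norm_deriv_le_mul_norm_pow {h F : ℂ → ℂ} {K : ℝ} {M : ℕ}
    (hh : ContinuousOn h (closedBall 0 1))
    (hderiv : ∀ u : ℂ, u ≠ 0 → ‖u‖ < 1 → HasDerivAt h (F u) u)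
    (bound : ∀ u : ℂ, u ≠ 0 → ‖u‖ < 1 → ‖F u‖ ≤ K * ‖u‖ ^ M) {ζ : ℂ}
    (hζ : ζ ∈ closedBall (0 : ℂ) 1) :
    ‖h ζ - h 0‖ ≤ K / (M + 1) := by
  have hK : 0 ≤ K := nonneg_of_mul_nonneg_left
    ((norm_nonneg _).trans (bound (1 / 2) (by norm_num) (by norm_num))) (pow_pos (by norm_num) _)
  rcases eq_or_ne ζ 0 with rfl | hζ0
  · simpa using div_nonneg hK (by positivity)
  have hζ1 : ‖ζ‖ ≤ 1 := mem_closedBall_zero_iff.1 hζ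
  have hnorm : ∀ t : ℝ, 0 ≤ t → ‖(t : ℂ) * ζ‖ = t * ‖ζ‖ := fun t ht => by
    rw [norm_mul, Complex.norm_real, Real.norm_of_nonneg ht]
  have hpath : MapsTo (fun t : ℝ => (t : ℂ) * ζ) (Icc 0 1) (closedBall 0 1) := fun t ht => by
    rw [mem_closedBall_zero_iff, hnorm t ht.1]
    exact mul_le_one₀ ht.2 (norm_nonneg _) hζ1
  have hinside : ∀ t ∈ Ioo (0 : ℝ) 1, (t : ℂ) * ζ ≠ 0 ∧ ‖(t : ℂ) * ζ‖ < 1 := fun t ht =>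
    ⟨mul_ne_zero (Complex.ofReal_ne_zero.2 ht.1.ne') hζ0, by
      rw [hnorm t ht.1.le]; exact (mul_le_of_le_one_right ht.1.le hζ1).trans_lt ht.2⟩
  have key := norm_sub_le_of_norm_deriv_le_mul_pow (f := fun t : ℝ => h (t * ζ))
    (f' := fun t => F (t * ζ) * ζ) (K := K) (M := M) (hh.comp (by fun_prop) hpath)
    (fun t ht => (hderiv _ (hinside t ht).1 (hinside t ht).2).comp t
      (by simpa using ((hasDerivAt_id (t : ℂ)).comp_ofReal).mul_const ζ))
    (fun t ht => by
      rw [norm_mul]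
      calc ‖F (t * ζ)‖ * ‖ζ‖ ≤ K * ‖(t : ℂ) * ζ‖ ^ M * 1 :=
            mul_le_mul (bound _ (hinside t ht).1 (hinside t ht).2) hζ1 (norm_nonneg _)
              (mul_nonneg hK (by positivity))
        _ ≤ K * t ^ M := by
            rw [mul_one, hnorm t ht.1.le]
            exact mul_le_mul_of_nonneg_left (pow_le_pow_left₀
              (mul_nonneg ht.1.le (norm_nonneg _)) (mul_le_of_le_one_right ht.1.le hζ1) M) hK)
  simpa using key

theorem laurent_legendrian_integral_estimate_general (m N₁ : ℕ)
    (a b' c' : ℕ → ℂ → ℂ)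
    (hLaurent : ∀ k, ∃ p : Polynomial ℂ, ∀ u : ℂ, u ≠ 0 →
      c' k u + ∑ q ∈ Finset.HasAntidiagonal.antidiagonal k, a q.1 u * b' q.2 u = Polynomial.eval u p / u ^ N₁)
    (hcore : ∀ u : ℂ, u ≠ 0 → c' 0 u + a 0 u * b' 0 u = 0)
    (g : ℕ → ℂ → ℂ)
    (hg : ∀ N : ℕ, ∀ u : ℂ, g N u = ∑ k ∈ Finset.range m,
      (c' k u + ∑ q ∈ Finset.HasAntidiagonal.antidiagonal k, a q.1 u * b' q.2 u) * u ^ (k * N)) :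
    (∀ N, N₁ ≤ N → ∃ p : Polynomial ℂ, ∀ u : ℂ, u ≠ 0 →
        g N u = u ^ (N - N₁) * Polynomial.eval u p) ∧
      ∀ ε : ℝ, 0 < ε → ∃ N₀ : ℕ, ∀ N, N₀ ≤ N →
        ∀ h : ℂ → ℂ, ContinuousOn h (Metric.closedBall 0 1) → h 0 = 0 →
          (∀ u : ℂ, u ≠ 0 → ‖u‖ < 1 → HasDerivAt h (g N u) u) →
          ∀ ζ ∈ Metric.closedBall (0 : ℂ) 1, ‖h ζ‖ < ε := by
  choose p hp using hLaurent
  set P : ℕ → ℂ[X] := fun N => ∑ k ∈ Finset.Ico 1 m, p k * X ^ (k * N - N)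
  have hgP : ∀ N, N₁ ≤ N → ∀ u : ℂ, u ≠ 0 → g N u = u ^ (N - N₁) * (P N).eval u :=
    fun N hN u hu => by
      rw [hg]
      refine sum_range_mul_pow_eq_pow_mul_eval m N N₁ _ p hu ?_ (fun k => hp k u hu) hN
      simpa using hcore u hu
  refine ⟨fun N hN => ⟨P N, hgP N hN⟩, fun ε hε => ?_⟩
  obtain ⟨C, hC⟩ := exists_norm_eval_sum_mul_X_pow_le (Finset.Ico 1 m) p
  obtain ⟨n, hn⟩ := exists_nat_gt (C / ε)
  refine ⟨N₁ + n, fun N hN h hh h0 hderiv ζ hζ => ?_⟩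
  have hbound : ∀ u : ℂ, u ≠ 0 → ‖u‖ < 1 → ‖g N u‖ ≤ C * ‖u‖ ^ (N - N₁) := fun u hu hu1 => by
    rw [hgP N (by omega) u hu, norm_mul, norm_pow, mul_comm]
    exact mul_le_mul_of_nonneg_right (hC _ u hu1.le) (by positivity)
  have hn' : C / ε < (N - N₁ : ℕ) + 1 := hn.trans (by exact_mod_cast (by omega : n < N - N₁ + 1))
  calc ‖h ζ‖ = ‖h ζ - h 0‖ := by rw [h0, sub_zero]
    _ ≤ C / ((N - N₁ : ℕ) + 1) :=
      Complex.norm_sub_le_of_norm_deriv_le_mul_norm_pow hh hderiv hbound hζ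
    _ < ε := by
      rw [div_lt_iff₀ hε] at hn'
      rwa [div_lt_iff₀ (by positivity), mul_comm]

/-- Let `aⱼ, bₖ, cₘ` be Laurent polynomials (finitely many nonzero, indices `< m`), with the
core curve Legendrian (`c₀' + a₀·b₀' = 0`) and `cₘ = -(1/m)∑_{j+k=m} k aⱼ bₖ`.  Let `N₁`
bound the pole order at `0` of all coefficients `cₘ' + ∑_{j+k=m} aⱼ bₖ'`.  Then for every
`N ≥ N₁` the function `(Z_u + X·Y_u)(u, u^N) = ∑ₘ (cₘ' + ∑_{j+k=m} aⱼ bₖ')(u)·u^{mN}` is a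
holomorphic polynomial divisible by `u^{N-N₁}`, and consequently
`sup_{|ζ|≤1} |∫₀^ζ (Z_u + X·Y_u)(u, u^N) du| → 0` as `N → ∞`. -/
theorem laurent_legendrian_integral_estimate (m N₁ : ℕ)
    (a b c a' b' c' : ℕ → ℂ → ℂ)
    (hfin : ∀ k, m ≤ k → ∀ u : ℂ, a k u = 0 ∧ b k u = 0 ∧ c k u = 0)
    (hder : ∀ k, ∀ u : ℂ, u ≠ 0 →
      HasDerivAt (a k) (a' k u) u ∧ HasDerivAt (b k) (b' k u) u ∧
        HasDerivAt (c k) (c' k u) u)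
    (hLaurent : ∀ k, ∃ p : Polynomial ℂ, ∀ u : ℂ, u ≠ 0 →
      c' k u + ∑ q ∈ Finset.HasAntidiagonal.antidiagonal k, a q.1 u * b' q.2 u = Polynomial.eval u p / u ^ N₁)
    (hcore : ∀ u : ℂ, u ≠ 0 → c' 0 u + a 0 u * b' 0 u = 0)
    (hcn : ∀ k : ℕ, 1 ≤ k → ∀ u : ℂ, u ≠ 0 →
      (k : ℂ) * c k u + ∑ q ∈ Finset.HasAntidiagonal.antidiagonal k, (q.2 : ℂ) * a q.1 u * b q.2 u = 0)
    (g : ℕ → ℂ → ℂ)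
    (hg : ∀ N : ℕ, ∀ u : ℂ, g N u = ∑ k ∈ Finset.range m,
      (c' k u + ∑ q ∈ Finset.HasAntidiagonal.antidiagonal k, a q.1 u * b' q.2 u) * u ^ (k * N)) :
    (∀ N, N₁ ≤ N → ∃ p : Polynomial ℂ, ∀ u : ℂ, u ≠ 0 →
        g N u = u ^ (N - N₁) * Polynomial.eval u p) ∧
      ∀ ε : ℝ, 0 < ε → ∃ N₀ : ℕ, ∀ N, N₀ ≤ N →
        ∀ h : ℂ → ℂ, ContinuousOn h (Metric.closedBall 0 1) → h 0 = 0 →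
          (∀ u : ℂ, u ≠ 0 → ‖u‖ < 1 → HasDerivAt h (g N u) u) →
          ∀ ζ ∈ Metric.closedBall (0 : ℂ) 1, ‖h ζ‖ < ε :=
  laurent_legendrian_integral_estimate_general m N₁ a b' c' hLaurent hcore g hg
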